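/- arXiv:2402.08798 — 2 statements merged into one kernel-verified Lean document; each statement's English description precedes it below -/
import Mathlib

section
/- Let n ≥ 1 and let (a₁,…,aₙ,b₁,…,bₙ) and (a'₁,…,a'ₙ,b'₁,…,b'ₙ) be two tuples of real numbers, each consisting of 2n pairwise distinct reals, whose order types coincide: for every two positions in the tuple, the corresponding strict inequality holds for the first tuple iff it holds for the second. Then the multi-ratios ∏_{k=1}^n (b_k − a_k) / ∏_{k=1}^n (a_k − b_{k+1}) and ∏_{k=1}^n (b'_k − a'_k) / ∏_{k=1}^n (a'_k − b'_{k+1}) (indices mod n) are both nonzero and have the same sign. -/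
private lemma prod_sign_aux {ι : Type*} (s : Finset ι) (f g : ι → ℝ)
    (hf : ∀ i ∈ s, f i ≠ 0) (hg : ∀ i ∈ s, g i ≠ 0)
    (h : ∀ i ∈ s, (0 < f i ↔ 0 < g i)) :
    (∏ i ∈ s, f i) ≠ 0 ∧ (∏ i ∈ s, g i) ≠ 0 ∧
      (0 < ∏ i ∈ s, f i ↔ 0 < ∏ i ∈ s, g i) := by
  classical
  induction s using Finset.induction with
  | empty => simp
  | @insert j s hi ih =>
    obtain ⟨hF, hG, hFG⟩ := ih (fun i hi => hf i (by simp [hi]))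
      (fun i hi => hg i (by simp [hi])) (fun i hi => h i (by simp [hi]))
    have hfj := hf j (by simp)
    have hgj := hg j (by simp)
    have hj := h j (by simp)
    rw [Finset.prod_insert hi, Finset.prod_insert hi]
    refine ⟨mul_ne_zero hfj hF, mul_ne_zero hgj hG, ?_⟩
    rcases hfj.lt_or_gt with h1 | h1 <;> rcases hF.lt_or_gt with h2 | h2 <;>
      rcases hgj.lt_or_gt with h3 | h3 <;> rcases hG.lt_or_gt with h4 | h4 <;>
      constructor <;> intro hx <;> first
        | exact mul_pos h3 h4
        | exact mul_pos h1 h2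
        | exact mul_pos_of_neg_of_neg h3 h4
        | exact mul_pos_of_neg_of_neg h1 h2
        | (exfalso; first
            | exact absurd (hj.1 h1) (not_lt.2 h3.le)
            | exact absurd (hj.2 h3) (not_lt.2 h1.le)
            | exact absurd (hFG.1 h2) (not_lt.2 h4.le)
            | exact absurd (hFG.2 h4) (not_lt.2 h2.le)
            | exact absurd hx (not_lt.2 (mul_nonpos_of_nonneg_of_nonpos h1.le h2.le))
            | exact absurd hx (not_lt.2 (mul_nonpos_of_nonpos_of_nonneg h1.le h2.le))
            | exact absurd hx (not_lt.2 (mul_nonpos_of_nonneg_of_nonpos h3.le h4.le))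
            | exact absurd hx (not_lt.2 (mul_nonpos_of_nonpos_of_nonneg h3.le h4.le)))

/-- the sign of the multi-ratio depends only on the order type of the
`2n` pairwise distinct real points. If the tuples `(a,b)` and `(a',b')` each consist
of `2n` pairwise distinct reals and have the same order type, then the multi-ratios
`∏(b_k − a_k)/∏(a_k − b_{k+1})` and `∏(b'_k − a'_k)/∏(a'_k − b'_{k+1})` are nonzero
and have the same sign. -/
theorem multiratio_sign_depends_on_order_type (n : ℕ) [NeZero n]
    (a b a' b' : Fin n → ℝ)
    (hdist : Function.Injective (Sum.elim a b))
    (hdist' : Function.Injective (Sum.elim a' b'))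
    (horder : ∀ i j : Fin n ⊕ Fin n,
      Sum.elim a b i < Sum.elim a b j ↔ Sum.elim a' b' i < Sum.elim a' b' j) :
    (∏ k, (b k - a k)) / (∏ k, (a k - b (k + 1))) ≠ 0 ∧
    (∏ k, (b' k - a' k)) / (∏ k, (a' k - b' (k + 1))) ≠ 0 ∧
    (0 < (∏ k, (b k - a k)) / (∏ k, (a k - b (k + 1))) ↔
      0 < (∏ k, (b' k - a' k)) / (∏ k, (a' k - b' (k + 1)))) := by
  have hba : ∀ k : Fin n, b k - a k ≠ 0 := fun k => by
    intro h
    have : Sum.elim a b (Sum.inr k) = Sum.elim a b (Sum.inl k) := by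
      simpa using sub_eq_zero.mp h
    exact absurd (hdist this) (by simp)
  have hba' : ∀ k : Fin n, b' k - a' k ≠ 0 := fun k => by
    intro h
    have : Sum.elim a' b' (Sum.inr k) = Sum.elim a' b' (Sum.inl k) := by
      simpa using sub_eq_zero.mp h
    exact absurd (hdist' this) (by simp)
  have hab : ∀ k : Fin n, a k - b (k + 1) ≠ 0 := fun k => by
    intro h
    have : Sum.elim a b (Sum.inl k) = Sum.elim a b (Sum.inr (k + 1)) := by
      simpa using sub_eq_zero.mp h
    exact absurd (hdist this) (by simp)
  have hab' : ∀ k : Fin n, a' k - b' (k + 1) ≠ 0 := fun k => by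
    intro h
    have : Sum.elim a' b' (Sum.inl k) = Sum.elim a' b' (Sum.inr (k + 1)) := by
      simpa using sub_eq_zero.mp h
    exact absurd (hdist' this) (by simp)
  obtain ⟨hN, hN', hNiff⟩ := prod_sign_aux Finset.univ (fun k => b k - a k)
    (fun k => b' k - a' k) (fun k _ => hba k) (fun k _ => hba' k)
    (fun k _ => by
      have := horder (Sum.inl k) (Sum.inr k)
      simp only [Sum.elim_inl, Sum.elim_inr] at this
      simp [sub_pos, this])
  obtain ⟨hD, hD', hDiff⟩ := prod_sign_aux Finset.univ (fun k => a k - b (k + 1))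
    (fun k => a' k - b' (k + 1)) (fun k _ => hab k) (fun k _ => hab' k)
    (fun k _ => by
      have := horder (Sum.inr (k + 1)) (Sum.inl k)
      simp only [Sum.elim_inl, Sum.elim_inr] at this
      simp [sub_pos, this])
  refine ⟨div_ne_zero hN hD, div_ne_zero hN' hD', ?_⟩
  rw [div_pos_iff, div_pos_iff]
  constructor
  · rintro (⟨h1, h2⟩ | ⟨h1, h2⟩)
    · exact Or.inl ⟨hNiff.1 h1, hDiff.1 h2⟩
    · exact Or.inr ⟨(hN'.lt_or_gt.resolve_right fun h => absurd (hNiff.2 h)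
        (not_lt.2 h1.le)), (hD'.lt_or_gt.resolve_right fun h => absurd (hDiff.2 h)
        (not_lt.2 h2.le))⟩
  · rintro (⟨h1, h2⟩ | ⟨h1, h2⟩)
    · exact Or.inl ⟨hNiff.2 h1, hDiff.2 h2⟩
    · exact Or.inr ⟨(hN.lt_or_gt.resolve_right fun h => absurd (hNiff.1 h)
        (not_lt.2 h1.le)), (hD.lt_or_gt.resolve_right fun h => absurd (hDiff.1 h)
        (not_lt.2 h2.le))⟩
end

section
/- Let U ⊆ ℂ be open, let ζ₁, ζ₂ be holomorphic on U with ζ₂′ ≠ 0 on U, set R = ζ₁′/ζ₂′ and assume Im R > 0 on U. Suppose F : U → V, F(z) = (Re ζ₁(z), Re ζ₂(z)), is a homeomorphism onto an open set V ⊆ ℝ² with inverse G. Write coordinates (x₁,x₂) on V and define y₁ = Im ζ₁ ∘ G, y₂ = Im ζ₂ ∘ G on V. Then y₁, y₂ are differentiable on V and at every point of V: ∂y₂/∂x₁ = −1/Im R, ∂y₂/∂x₂ = Re R / Im R = −∂y₁/∂x₁, and ∂y₁/∂x₂ = |R|² / Im R, where R is evaluated at the corresponding point G(x₁,x₂). 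-/
/-!
Pulled back along `G`, the identity `dζ₁ = R dζ₂` reads `dx₁ + i dy₁ = R (dx₂ + i dy₂)`.
Its real part `dx₁ = Re R dx₂ - Im R dy₂` can be solved for `dy₂` because `Im R ≠ 0`, and its
imaginary part then gives `dy₁`. The same computation shows that the real differential
`w ↦ (Re (ζ₁' w), Re (ζ₂' w))` of `F` has trivial kernel, so it is invertible and `G`, a
continuous local inverse of `F`, is differentiable with the inverse differential.
-/

open Complex Filter Topology

namespace Complex

theorem im_eq_of_re_mul (R s : ℂ) (hR : R.im ≠ 0) :
    s.im = (R.re * s.re - (R * s).re) / R.im := by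
  rw [mul_re]
  field_simp
  ring

theorem im_mul_eq_of_re_mul (R s : ℂ) (hR : R.im ≠ 0) :
    (R * s).im = (‖R‖ ^ 2 * s.re - R.re * (R * s).re) / R.im := by
  rw [mul_im, im_eq_of_re_mul R s hR, Complex.sq_norm, normSq_apply, mul_re]
  field_simp
  ring

noncomputable def reMulProd (a b : ℂ) : ℂ →L[ℝ] ℝ × ℝ :=
  (reCLM.comp (a • (1 : ℂ →L[ℝ] ℂ))).prod (reCLM.comp (b • (1 : ℂ →L[ℝ] ℂ)))

@[simp]
theorem reMulProd_apply (a b w : ℂ) : reMulProd a b w = ((a * w).re, (b * w).re) := rfl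

theorem reMulProd_injective {a b : ℂ} (h : (a / b).im ≠ 0) :
    Function.Injective (reMulProd a b) := by
  have hb : b ≠ 0 := by rintro rfl; simp at h
  rw [injective_iff_map_eq_zero]
  intro w hw
  simp only [reMulProd_apply, Prod.mk_eq_zero] at hw
  have ha : a * w = a / b * (b * w) := by field_simp
  have him : (b * w).im = 0 := by
    rw [im_eq_of_re_mul _ _ h, ← ha, hw.1, hw.2]; simp
  simpa [hb] using Complex.ext (z := b * w) (w := 0) hw.2 him

noncomputable def reMulProdEquiv {a b : ℂ} (h : (a / b).im ≠ 0) : ℂ ≃L[ℝ] ℝ × ℝ :=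
  ((reMulProd a b : ℂ →ₗ[ℝ] ℝ × ℝ).linearEquivOfInjective (reMulProd_injective h)
    (by simp)).toContinuousLinearEquiv

theorem im_mul_reMulProdEquiv_symm {a b : ℂ} (h : (a / b).im ≠ 0) (v : ℝ × ℝ) :
    (b * (reMulProdEquiv h).symm v).im = ((a / b).re * v.2 - v.1) / (a / b).im ∧
    (a * (reMulProdEquiv h).symm v).im = (‖a / b‖ ^ 2 * v.2 - (a / b).re * v.1) / (a / b).im := by
  have hb : b ≠ 0 := by rintro rfl; simp at h
  set w := (reMulProdEquiv h).symm v
  have hv : ((a * w).re, (b * w).re) = v := (reMulProdEquiv h).apply_symm_apply v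
  have ha : a * w = a / b * (b * w) := by field_simp
  rw [← hv, ha]
  exact ⟨im_eq_of_re_mul _ _ h, im_mul_eq_of_re_mul _ _ h⟩

end Complex

theorem HasDerivAt.hasFDerivAt_re_prod {f g : ℂ → ℂ} {a b z : ℂ} (hf : HasDerivAt f a z)
    (hg : HasDerivAt g b z) :
    HasFDerivAt (fun w => ((f w).re, (g w).re)) (reMulProd a b) z :=
  (reCLM.hasFDerivAt.comp z hf.complexToReal_fderiv).prodMk
    (reCLM.hasFDerivAt.comp z hg.complexToReal_fderiv)

theorem HasDerivAt.hasFDerivAt_im_comp {E : Type*} [NormedAddCommGroup E] [NormedSpace ℝ E]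
    {f : ℂ → ℂ} {a : ℂ} {G : E → ℂ} {D : E →L[ℝ] ℂ} {p : E} (hf : HasDerivAt f a (G p))
    (hG : HasFDerivAt G D p) :
    HasFDerivAt (fun q => (f (G q)).im) (imCLM.comp ((a • (1 : ℂ →L[ℝ] ℂ)).comp D)) p :=
  imCLM.hasFDerivAt.comp p (hf.complexToReal_fderiv.comp p hG)

theorem hasFDerivAt_of_local_left_inverse_re_prod {f g : ℂ → ℂ} {a b : ℂ} {G : ℝ × ℝ → ℂ}
    {p : ℝ × ℝ} (hf : HasDerivAt f a (G p)) (hg : HasDerivAt g b (G p)) (h : (a / b).im ≠ 0)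
    (hG : ContinuousAt G p) (hfg : ∀ᶠ q in 𝓝 p, ((f (G q)).re, (g (G q)).re) = q) :
    HasFDerivAt G ((reMulProdEquiv h).symm : ℝ × ℝ →L[ℝ] ℂ) p :=
  HasFDerivAt.of_local_left_inverse hG (hf.hasFDerivAt_re_prod hg) hfg

theorem amoeba_coordinates_partial_derivatives_general
    (U : Set ℂ) (V : Set (ℝ × ℝ)) (hV : IsOpen V)
    (ζ₁ ζ₂ ζ₁' ζ₂' : ℂ → ℂ)
    (h₁ : ∀ z ∈ U, HasDerivAt ζ₁ (ζ₁' z) z)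
    (h₂ : ∀ z ∈ U, HasDerivAt ζ₂ (ζ₂' z) z)
    (hR : ∀ z ∈ U, 0 < (ζ₁' z / ζ₂' z).im)
    (G : ℝ × ℝ → ℂ)
    (hGmem : ∀ p ∈ V, G p ∈ U)
    (hFG : ∀ p ∈ V, (((ζ₁ (G p)).re, (ζ₂ (G p)).re) : ℝ × ℝ) = p)
    (hGcont : ContinuousOn G V) :
    ∀ p ∈ V,
      DifferentiableAt ℝ (fun q => (ζ₁ (G q)).im) p ∧
      DifferentiableAt ℝ (fun q => (ζ₂ (G q)).im) p ∧
      fderiv ℝ (fun q => (ζ₂ (G q)).im) p (1, 0) =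
        -1 / (ζ₁' (G p) / ζ₂' (G p)).im ∧
      fderiv ℝ (fun q => (ζ₂ (G q)).im) p (0, 1) =
        (ζ₁' (G p) / ζ₂' (G p)).re / (ζ₁' (G p) / ζ₂' (G p)).im ∧
      fderiv ℝ (fun q => (ζ₁ (G q)).im) p (1, 0) =
        -((ζ₁' (G p) / ζ₂' (G p)).re / (ζ₁' (G p) / ζ₂' (G p)).im) ∧
      fderiv ℝ (fun q => (ζ₁ (G q)).im) p (0, 1) =
        ‖ζ₁' (G p) / ζ₂' (G p)‖ ^ 2 / (ζ₁' (G p) / ζ₂' (G p)).im := by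
  intro p hp
  have hGp := hGmem p hp
  have hRp := (hR _ hGp).ne'
  have hVp := hV.mem_nhds hp
  have hG := hasFDerivAt_of_local_left_inverse_re_prod (h₁ _ hGp) (h₂ _ hGp) hRp
    (hGcont.continuousAt hVp) (eventually_of_mem hVp hFG)
  have hy₁ := (h₁ _ hGp).hasFDerivAt_im_comp hG
  have hy₂ := (h₂ _ hGp).hasFDerivAt_im_comp hG
  have hdy₁ (v : ℝ × ℝ) := (congrArg (· v) hy₁.fderiv).trans (im_mul_reMulProdEquiv_symm hRp v).2
  have hdy₂ (v : ℝ × ℝ) := (congrArg (· v) hy₂.fderiv).trans (im_mul_reMulProdEquiv_symm hRp v).1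
  refine ⟨hy₁.differentiableAt, hy₂.differentiableAt, (hdy₂ _).trans ?_, (hdy₂ _).trans ?_,
    (hdy₁ _).trans ?_, (hdy₁ _).trans ?_⟩ <;> ring

/-- partial derivatives of the imaginary parts `y₁ = Im ζ₁ ∘ G`,
`y₂ = Im ζ₂ ∘ G` of the Abelian integrals in the amoeba coordinates
`(x₁,x₂) = (Re ζ₁, Re ζ₂)`: with `R = ζ₁′/ζ₂′` and `Im R > 0`,
`∂y₂/∂x₁ = −1/Im R`, `∂y₂/∂x₂ = Re R/Im R = −∂y₁/∂x₁`, `∂y₁/∂x₂ = |R|²/Im R`. -/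
theorem amoeba_coordinates_partial_derivatives
    (U : Set ℂ) (hU : IsOpen U) (V : Set (ℝ × ℝ)) (hV : IsOpen V)
    (ζ₁ ζ₂ ζ₁' ζ₂' : ℂ → ℂ)
    (h₁ : ∀ z ∈ U, HasDerivAt ζ₁ (ζ₁' z) z)
    (h₂ : ∀ z ∈ U, HasDerivAt ζ₂ (ζ₂' z) z)
    (hne : ∀ z ∈ U, ζ₂' z ≠ 0)
    (hR : ∀ z ∈ U, 0 < (ζ₁' z / ζ₂' z).im)
    (G : ℝ × ℝ → ℂ)
    (hFmem : ∀ z ∈ U, ((ζ₁ z).re, (ζ₂ z).re) ∈ V)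
    (hGmem : ∀ p ∈ V, G p ∈ U)
    (hGF : ∀ z ∈ U, G ((ζ₁ z).re, (ζ₂ z).re) = z)
    (hFG : ∀ p ∈ V, (((ζ₁ (G p)).re, (ζ₂ (G p)).re) : ℝ × ℝ) = p)
    (hGcont : ContinuousOn G V) :
    ∀ p ∈ V,
      DifferentiableAt ℝ (fun q => (ζ₁ (G q)).im) p ∧
      DifferentiableAt ℝ (fun q => (ζ₂ (G q)).im) p ∧
      fderiv ℝ (fun q => (ζ₂ (G q)).im) p (1, 0) =
        -1 / (ζ₁' (G p) / ζ₂' (G p)).im ∧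
      fderiv ℝ (fun q => (ζ₂ (G q)).im) p (0, 1) =
        (ζ₁' (G p) / ζ₂' (G p)).re / (ζ₁' (G p) / ζ₂' (G p)).im ∧
      fderiv ℝ (fun q => (ζ₁ (G q)).im) p (1, 0) =
        -((ζ₁' (G p) / ζ₂' (G p)).re / (ζ₁' (G p) / ζ₂' (G p)).im) ∧
      fderiv ℝ (fun q => (ζ₁ (G q)).im) p (0, 1) =
        ‖ζ₁' (G p) / ζ₂' (G p)‖ ^ 2 / (ζ₁' (G p) / ζ₂' (G p)).im :=
  amoeba_coordinates_partial_derivatives_general U V hV ζ₁ ζ₂ ζ₁' ζ₂' h₁ h₂ hR G hGmem hFG hGcont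
end
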